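/- Let f be a monic complex polynomial of degree n ≥ 2 all of whose roots lie on a straight line through the origin, i.e. there exists θ ∈ ℝ such that every root of f is of the form t·e^{iθ} with t ∈ ℝ. Let w_1, ..., w_n be the roots of f counted with multiplicity, ξ_1, ..., ξ_{n-1} the roots of f' counted with multiplicity, and z_{n-1} the unique root of f^{(n-1)}. Then Σ_{j=1}^{n-1} |ξ_j|^2 = ((n-2)/n) · Σ_{j=1}^{n} |w_j|^2 + |z_{n-1}|^2. -/

import Mathlib

/-!
Writing `e_j` for elementary symmetric functions, comparing coefficients of `f` and of
`f⁽ᵏ⁾` through Vieta gives `n e_j(ξ) = (n - j) e_j(w)` for the roots `ξ` of `f'` and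
`n z_{n-1} = e_1(w)`. Together with `Σ x² = e_1² - 2 e_2` these make
`Σ ξ_j² = (n - 2)/n Σ w_j² + z_{n-1}²` an identity for every complex polynomial.
If the roots of `f` lie on the line `ℝ u` with `|u| = 1`, then so do the `ξ_j` (Gauss–Lucas)
and `z_{n-1} = e_1(w)/n`, and for such points `|x|² u² = x²`; dividing by `u²` gives the
claim.
-/

open Polynomial Submodule

namespace Multiset

variable {R : Type*}

theorem esymm_one [CommSemiring R] (s : Multiset R) : s.esymm 1 = s.sum := by
  simp [esymm, powersetCard_one]

theorem esymm_eq_zero_of_card_lt [CommSemiring R] {s : Multiset R} {j : ℕ} (h : card s < j) :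
    s.esymm j = 0 := by
  simp [esymm, powersetCard_eq_empty _ h]

theorem esymm_two_cons [CommSemiring R] (a : R) (s : Multiset R) :
    (a ::ₘ s).esymm 2 = s.esymm 2 + a * s.sum := by
  simp only [esymm, powersetCard_cons, powersetCard_one, map_map, Function.comp_apply, map_add,
    prod_cons, prod_singleton, sum_add]
  rw [sum_map_mul_left, map_id']

theorem sum_map_sq [CommRing R] (s : Multiset R) :
    (s.map (· ^ 2)).sum = s.sum ^ 2 - 2 * s.esymm 2 := by
  induction s using Multiset.induction with
  | empty => simp [esymm_eq_zero_of_card_lt (s := 0) (j := 2) (by simp)]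
  | cons a s ih =>
    rw [map_cons, sum_cons, sum_cons, esymm_two_cons, ih]
    ring

end Multiset

theorem Complex.norm_sq_mul_sq_of_mem_span_singleton {u x : ℂ} (hu : ‖u‖ = 1)
    (hx : x ∈ ℝ ∙ u) :
    (‖x‖ ^ 2 : ℝ) * u ^ 2 = x ^ 2 := by
  obtain ⟨t, rfl⟩ := mem_span_singleton.1 hx
  simp [Complex.real_smul, hu, sq_abs]
  ring

theorem Complex.sum_map_norm_sq_mul_sq {u : ℂ} (hu : ‖u‖ = 1) {s : Multiset ℂ}
    (hs : ∀ x ∈ s, x ∈ ℝ ∙ u) :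
    ((s.map (‖·‖ ^ 2)).sum : ℂ) * u ^ 2 = (s.map (· ^ 2)).sum := by
  rw [← Complex.ofRealHom_eq_coe, map_multiset_sum, Multiset.map_map,
    ← Multiset.sum_map_mul_right]
  exact congrArg _ (Multiset.map_congr rfl fun x hx =>
    norm_sq_mul_sq_of_mem_span_singleton hu (hs x hx))

namespace Polynomial

section IterateDerivative

theorem coeff_iterate_derivative_natDegree_sub {R : Type*} [Semiring R] {p : R[X]} {k : ℕ}
    (hk : k ≤ p.natDegree) :
    (derivative^[k] p).coeff (p.natDegree - k) = p.natDegree.descFactorial k * p.leadingCoeff := by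
  rw [coeff_iterate_derivative, Nat.sub_add_cancel hk, nsmul_eq_mul, leadingCoeff]

variable {R : Type*} [CommRing R] [IsDomain R] [CharZero R]

theorem natDegree_iterate_derivative_eq {p : R[X]} {k : ℕ} (hk : k ≤ p.natDegree) :
    (derivative^[k] p).natDegree = p.natDegree - k := by
  rcases eq_or_ne p 0 with rfl | hp
  · simp
  refine natDegree_eq_of_le_of_coeff_ne_zero (natDegree_iterate_derivative p k) ?_
  rw [coeff_iterate_derivative_natDegree_sub hk]
  exact mul_ne_zero (Nat.cast_ne_zero.2 (Nat.descFactorial_eq_zero_iff_lt.not.2 (by omega)))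
    (leadingCoeff_ne_zero.2 hp)

theorem leadingCoeff_iterate_derivative {p : R[X]} {k : ℕ} (hk : k ≤ p.natDegree) :
    (derivative^[k] p).leadingCoeff = p.natDegree.descFactorial k * p.leadingCoeff := by
  rw [leadingCoeff, natDegree_iterate_derivative_eq hk, coeff_iterate_derivative_natDegree_sub hk]

end IterateDerivative

section AlgClosed

variable {K : Type*} [Field K] [IsAlgClosed K] [CharZero K]

theorem descFactorial_mul_esymm_roots_iterate_derivative (f : K[X]) {k : ℕ}
    (hk : k ≤ f.natDegree) (j : ℕ) :
    (f.natDegree.descFactorial k : K) * (derivative^[k] f).roots.esymm j =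
      ((f.natDegree - j).descFactorial k : K) * f.roots.esymm j := by
  have hdeg : (derivative^[k] f).natDegree = f.natDegree - k := natDegree_iterate_derivative_eq hk
  rcases le_or_gt j (f.natDegree - k) with hj | hj
  · rcases eq_or_ne f 0 with rfl | hf
    · obtain rfl : j = 0 := by simpa using hj
      simp [Multiset.esymm]
    have hvieta_g := coeff_eq_esymm_roots_of_card IsAlgClosed.card_roots_eq_natDegree
      (p := derivative^[k] f) (k := f.natDegree - k - j) (by omega)
    have hvieta_f := coeff_eq_esymm_roots_of_card IsAlgClosed.card_roots_eq_natDegree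
      (p := f) (k := f.natDegree - j) (by omega)
    rw [coeff_iterate_derivative, show f.natDegree - k - j + k = f.natDegree - j by omega,
      hvieta_f, leadingCoeff_iterate_derivative hk, hdeg,
      show f.natDegree - k - (f.natDegree - k - j) = j by omega,
      show f.natDegree - (f.natDegree - j) = j by omega, nsmul_eq_mul] at hvieta_g
    have hc : f.leadingCoeff * (-1) ^ j ≠ 0 := mul_ne_zero (leadingCoeff_ne_zero.2 hf) (by simp)
    apply mul_right_cancel₀ hc
    linear_combination hvieta_g.symm
  · have hrhs : ((f.natDegree - j).descFactorial k : K) * f.roots.esymm j = 0 := by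
      rcases le_or_gt j f.natDegree with hjn | hjn
      · rw [Nat.descFactorial_eq_zero_iff_lt.2 (by omega), Nat.cast_zero, zero_mul]
      · rw [Multiset.esymm_eq_zero_of_card_lt ((card_roots' f).trans_lt hjn), mul_zero]
    rw [hrhs, Multiset.esymm_eq_zero_of_card_lt
      (by rwa [IsAlgClosed.card_roots_eq_natDegree, hdeg]), mul_zero]

theorem natDegree_mul_eq_sum_roots_of_eval_iterate_derivative (f : K[X]) (hn : f.natDegree ≠ 0)
    {z : K} (hz : (derivative^[f.natDegree - 1] f).eval z = 0) :
    (f.natDegree : K) * z = f.roots.sum := by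
  have hdeg : (derivative^[f.natDegree - 1] f).natDegree = 1 := by
    rw [natDegree_iterate_derivative_eq (Nat.sub_le _ 1)]
    omega
  have hroots : (derivative^[f.natDegree - 1] f).roots = {z} := by
    obtain ⟨a, ha⟩ := Multiset.card_eq_one.1 (IsAlgClosed.card_roots_eq_natDegree.trans hdeg)
    have hz_mem : z ∈ (derivative^[f.natDegree - 1] f).roots :=
      (mem_roots (ne_zero_of_natDegree_gt (hdeg ▸ Nat.zero_lt_one))).2 hz
    rw [ha, Multiset.mem_singleton] at hz_mem
    rw [ha, hz_mem]
  have hdesc : f.natDegree.descFactorial (f.natDegree - 1) =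
      f.natDegree * (f.natDegree - 1).factorial := by
    have h := Nat.factorial_mul_descFactorial (Nat.sub_le f.natDegree 1)
    rw [Nat.sub_sub_self (by omega), Nat.factorial_one, one_mul] at h
    rw [h, Nat.mul_factorial_pred hn]
  have h := descFactorial_mul_esymm_roots_iterate_derivative f (Nat.sub_le _ 1) 1
  rw [hroots, Multiset.esymm_one, Multiset.esymm_one, Multiset.sum_singleton, hdesc,
    Nat.descFactorial_self, Nat.cast_mul, mul_assoc, mul_left_comm] at h
  exact mul_left_cancel₀ (Nat.cast_ne_zero.2 (Nat.factorial_ne_zero _)) h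

theorem natDegree_mul_sum_sq_roots_derivative (f : K[X]) (hn : 2 ≤ f.natDegree)
    {z : K} (hz : (derivative^[f.natDegree - 1] f).eval z = 0) :
    (f.natDegree : K) * ((derivative f).roots.map (· ^ 2)).sum =
      ((f.natDegree : K) - 2) * (f.roots.map (· ^ 2)).sum + f.natDegree * z ^ 2 := by
  have h1 := descFactorial_mul_esymm_roots_iterate_derivative f (k := 1) (by omega) 1
  have h2 := descFactorial_mul_esymm_roots_iterate_derivative f (k := 1) (by omega) 2
  simp only [Function.iterate_one, Nat.descFactorial_one, Multiset.esymm_one] at h1 h2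
  push_cast [Nat.cast_sub (by omega : 1 ≤ f.natDegree), Nat.cast_sub hn] at h1 h2
  have hc := natDegree_mul_eq_sum_roots_of_eval_iterate_derivative f (by omega) hz
  rw [Multiset.sum_map_sq, Multiset.sum_map_sq]
  apply mul_left_cancel₀ (Nat.cast_ne_zero.2 (by omega) : (f.natDegree : K) ≠ 0)
  linear_combination
    (f.natDegree * (derivative f).roots.sum + (f.natDegree - 1) * f.roots.sum) * h1 -
      2 * f.natDegree * h2 - (f.natDegree * z + f.roots.sum) * hc

end AlgClosed

theorem mem_of_mem_roots_derivative_of_convex {P : ℂ[X]} (hP : 0 < P.degree)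
    {C : Set ℂ} (hC : Convex ℝ C) (h : ∀ x ∈ P.roots, x ∈ C) {x : ℂ}
    (hx : x ∈ P.derivative.roots) : x ∈ C := by
  have hroots {Q : ℂ[X]} {y : ℂ} : y ∈ Q.rootSet ℂ ↔ y ∈ Q.roots := by
    rw [mem_rootSet, mem_roots', IsRoot, coe_aeval_eq_eval]
  exact convexHull_min (fun y hy => h y (hroots.1 hy)) hC
    (rootSet_derivative_subset_convexHull_rootSet hP (hroots.2 hx))

theorem natDegree_mul_sum_norm_sq_roots_derivative {f : ℂ[X]} (hn : 2 ≤ f.natDegree)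
    {u : ℂ} (hu : ‖u‖ = 1) (hf : ∀ x ∈ f.roots, x ∈ ℝ ∙ u) {z : ℂ}
    (hz : (derivative^[f.natDegree - 1] f).eval z = 0) :
    (f.natDegree : ℝ) * ((derivative f).roots.map (‖·‖ ^ 2)).sum =
      (f.natDegree - 2) * (f.roots.map (‖·‖ ^ 2)).sum + f.natDegree * ‖z‖ ^ 2 := by
  have hf' : ∀ x ∈ (derivative f).roots, x ∈ ℝ ∙ u := fun x hx =>
    mem_of_mem_roots_derivative_of_convex (natDegree_pos_iff_degree_pos.1 (by omega))
      (ℝ ∙ u).convex hf hx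
  have hz_mem : z ∈ ℝ ∙ u := by
    have hz_eq : z = (f.natDegree : ℝ)⁻¹ • f.roots.sum := by
      rw [← natDegree_mul_eq_sum_roots_of_eval_iterate_derivative f (by omega) hz,
        Complex.real_smul, Complex.ofReal_inv, Complex.ofReal_natCast,
        inv_mul_cancel_left₀ (Nat.cast_ne_zero.2 (by omega))]
    exact hz_eq ▸ smul_mem _ _ (multiset_sum_mem _ hf)
  have key := natDegree_mul_sum_sq_roots_derivative f hn hz
  rw [← Complex.sum_map_norm_sq_mul_sq hu hf', ← Complex.sum_map_norm_sq_mul_sq hu hf,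
    ← Complex.norm_sq_mul_sq_of_mem_span_singleton hu hz_mem] at key
  have hu2 : u ^ 2 ≠ 0 := pow_ne_zero 2 (norm_ne_zero_iff.1 (hu.trans_ne one_ne_zero))
  refine Complex.ofReal_injective (mul_right_cancel₀ hu2 ?_)
  push_cast at key ⊢
  linear_combination key

end Polynomial

theorem stmt17_general (n : ℕ) (hn : 2 ≤ n) (f : Polynomial ℂ)
    (hdeg : f.natDegree = n)
    (hline : ∃ θ : ℝ, ∀ z : ℂ, f.eval z = 0 →
      ∃ t : ℝ, z = (t : ℂ) * Complex.exp ((θ : ℂ) * Complex.I))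
    (z : ℂ) (hz : (Polynomial.derivative^[n - 1] f).eval z = 0) :
    (((Polynomial.derivative f).roots).map (fun x => ‖x‖ ^ 2)).sum =
      (((n : ℝ) - 2) / (n : ℝ)) * ((f.roots).map (fun x => ‖x‖ ^ 2)).sum +
        ‖z‖ ^ 2 := by
  subst hdeg
  obtain ⟨θ, hθ⟩ := hline
  have hroots : ∀ x ∈ f.roots, x ∈ ℝ ∙ Complex.exp (θ * Complex.I) := fun x hx => by
    obtain ⟨t, rfl⟩ := hθ x (isRoot_of_mem_roots hx)
    exact mem_span_singleton.2 ⟨t, Complex.real_smul⟩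
  have key := natDegree_mul_sum_norm_sq_roots_derivative hn
    (Complex.norm_exp_ofReal_mul_I θ) hroots hz
  field_simp
  linear_combination key

theorem stmt17 (n : ℕ) (hn : 2 ≤ n) (f : Polynomial ℂ) (hf : f.Monic)
    (hdeg : f.natDegree = n)
    (hline : ∃ θ : ℝ, ∀ z : ℂ, f.eval z = 0 →
      ∃ t : ℝ, z = (t : ℂ) * Complex.exp ((θ : ℂ) * Complex.I))
    (z : ℂ) (hz : (Polynomial.derivative^[n - 1] f).eval z = 0) :
    (((Polynomial.derivative f).roots).map (fun x => ‖x‖ ^ 2)).sum =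
      (((n : ℝ) - 2) / (n : ℝ)) * ((f.roots).map (fun x => ‖x‖ ^ 2)).sum +
        ‖z‖ ^ 2 :=
  stmt17_general n hn f hdeg hline z hz
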